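/- Reverse one-sided log bound: under the same Lipschitz assumption in the form |p(y|θ) − p(y|θ₀)| ≤ C·p(y|θ)·‖θ − θ₀‖ a.s., one has (log(p(y|θ₀)/E[p(y|θ)]))₊ ≤ log(1 + C·E[‖θ − θ₀‖]) ≤ C·E[‖θ − θ₀‖]. -/

import Mathlib

/-!
Since `p(θ₀) - p(θ) ≤ C p(θ) ‖θ - θ₀‖`, the ratio `p(θ₀)/p(θ)` is at most `1 + C‖θ - θ₀‖`
almost surely, so `E[p(θ₀)/p(θ)] ≤ 1 + C E‖θ - θ₀‖`. Jensen's inequality for the convex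
function `x ↦ 1/x` gives `p(θ₀)/E[p(θ)] ≤ E[p(θ₀)/p(θ)]`, and the two logarithmic bounds
follow from monotonicity of `log⁺` and `log (1 + t) ≤ t`.
-/

open MeasureTheory

namespace MeasureTheory

variable {Ω : Type*} [MeasurableSpace Ω] {μ : Measure Ω} [IsProbabilityMeasure μ]

/-- `ConvexOn.map_integral_le` needs a closed domain, which `x ↦ x⁻¹` lacks; instead integrate
its tangent line at `∫ f`. -/
theorem inv_integral_le_integral_inv {f : Ω → ℝ} (hf_pos : ∀ᵐ ω ∂μ, 0 < f ω)
    (hf : Integrable f μ) (hf_inv : Integrable (fun ω => (f ω)⁻¹) μ) :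
    (∫ ω, f ω ∂μ)⁻¹ ≤ ∫ ω, (f ω)⁻¹ ∂μ := by
  set c := ∫ ω, f ω ∂μ
  rcases le_or_gt c 0 with hc | hc
  · exact (inv_nonpos.mpr hc).trans
      (integral_nonneg_of_ae (hf_pos.mono fun ω h => (inv_pos.mpr h).le))
  have htangent : ∀ x : ℝ, 0 < x → (2 * c - x) / c ^ 2 ≤ x⁻¹ := fun x hx => by
    rw [div_le_iff₀ (by positivity), ← div_eq_inv_mul, le_div_iff₀ hx]
    nlinarith [sq_nonneg (x - c)]
  calc c⁻¹ = ∫ ω, (2 * c - f ω) / c ^ 2 ∂μ := by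
        rw [integral_div, integral_sub (integrable_const _) hf, integral_const]
        field_simp
        simp only [probReal_univ, smul_eq_mul, one_mul]
        ring
    _ ≤ ∫ ω, (f ω)⁻¹ ∂μ :=
        integral_mono_ae (((integrable_const _).sub hf).div_const _) hf_inv
          (hf_pos.mono fun ω h => htangent (f ω) h)

theorem div_integral_le_one_add_mul_integral {X Y : Ω → ℝ} {a C : ℝ} (ha : 0 < a)
    (hX_pos : ∀ᵐ ω ∂μ, 0 < X ω) (hX : Integrable X μ)
    (haX : Integrable (fun ω => a / X ω) μ) (hY : Integrable Y μ)
    (hsub : ∀ᵐ ω ∂μ, a - X ω ≤ C * X ω * Y ω) :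
    a / ∫ ω, X ω ∂μ ≤ 1 + C * ∫ ω, Y ω ∂μ := by
  have hX_inv : Integrable (fun ω => (X ω)⁻¹) μ :=
    (haX.const_mul a⁻¹).congr (Filter.Eventually.of_forall fun ω => by
      simp only [div_eq_mul_inv, ← mul_assoc, inv_mul_cancel₀ ha.ne', one_mul])
  have hratio : ∀ᵐ ω ∂μ, a / X ω ≤ 1 + C * Y ω := by
    filter_upwards [hX_pos, hsub] with ω hpos h
    rw [div_le_iff₀ hpos]
    linarith
  calc a / ∫ ω, X ω ∂μ = a * (∫ ω, X ω ∂μ)⁻¹ := div_eq_mul_inv _ _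
    _ ≤ a * ∫ ω, (X ω)⁻¹ ∂μ := by
        gcongr
        exact inv_integral_le_integral_inv hX_pos hX hX_inv
    _ = ∫ ω, a / X ω ∂μ := by
        rw [← integral_const_mul]
        rfl
    _ ≤ ∫ ω, (1 + C * Y ω) ∂μ :=
        integral_mono_ae haX ((integrable_const 1).add (hY.const_mul C)) hratio
    _ = 1 + C * ∫ ω, Y ω ∂μ := by
        rw [integral_add (integrable_const 1) (hY.const_mul C), integral_const,
          integral_const_mul, probReal_univ, one_smul]

end MeasureTheory

theorem Real.max_log_le_log_one_add {x t : ℝ} (hx : 0 ≤ x) (ht : 0 ≤ t) (hxt : x ≤ 1 + t) :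
    max (Real.log x) 0 ≤ Real.log (1 + t) := by
  rw [max_comm, ← Real.posLog_apply, ← Real.posLog_eq_log (by rw [abs_of_nonneg] <;> linarith)]
  exact Real.posLog_le_posLog hx hxt

theorem reverse_one_sided_log_bound_general (d : ℕ)
    {Ω : Type*} [MeasurableSpace Ω] (μ : Measure Ω) [IsProbabilityMeasure μ]
    (p : EuclideanSpace ℝ (Fin d) → ℝ) (θ : Ω → EuclideanSpace ℝ (Fin d))
    (θ₀ : EuclideanSpace ℝ (Fin d)) (C : ℝ) (hC : 0 ≤ C)
    (hpos : ∀ x, 0 < p x)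
    (hintp : Integrable (fun ω => p (θ ω)) μ)
    (hintr : Integrable (fun ω => p θ₀ / p (θ ω)) μ)
    (hintθ : Integrable (fun ω => ‖θ ω - θ₀‖) μ)
    (hLip : ∀ᵐ ω ∂μ, |p (θ ω) - p θ₀| ≤ C * p (θ ω) * ‖θ ω - θ₀‖) :
    max (Real.log (p θ₀ / ∫ ω, p (θ ω) ∂μ)) 0
        ≤ Real.log (1 + C * ∫ ω, ‖θ ω - θ₀‖ ∂μ)
    ∧ Real.log (1 + C * ∫ ω, ‖θ ω - θ₀‖ ∂μ)
        ≤ C * ∫ ω, ‖θ ω - θ₀‖ ∂μ := by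
  have hratio : p θ₀ / ∫ ω, p (θ ω) ∂μ ≤ 1 + C * ∫ ω, ‖θ ω - θ₀‖ ∂μ :=
    div_integral_le_one_add_mul_integral (hpos θ₀) (.of_forall fun ω => hpos (θ ω)) hintp
      hintr hintθ (hLip.mono fun ω h => (le_abs_self _).trans ((abs_sub_comm _ _).trans_le h))
  have hCI : 0 ≤ C * ∫ ω, ‖θ ω - θ₀‖ ∂μ :=
    mul_nonneg hC (integral_nonneg fun ω => norm_nonneg _)
  refine ⟨Real.max_log_le_log_one_add ?_ hCI hratio, ?_⟩
  · exact div_nonneg (hpos θ₀).le (integral_nonneg fun ω => (hpos (θ ω)).le)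
  · linarith [Real.log_le_sub_one_of_pos (show 0 < 1 + C * ∫ ω, ‖θ ω - θ₀‖ ∂μ by linarith)]

/-- Reverse one-sided log bound: if `|p(θω) − p(θ₀)| ≤ C p(θω)‖θω − θ₀‖` a.s.,
then `(log(p(θ₀)/E[p(θ)]))₊ ≤ log(1 + C·E‖θ − θ₀‖) ≤ C·E‖θ − θ₀‖`. -/
theorem reverse_one_sided_log_bound (d : ℕ)
    {Ω : Type*} [MeasurableSpace Ω] (μ : Measure Ω) [IsProbabilityMeasure μ]
    (p : EuclideanSpace ℝ (Fin d) → ℝ) (θ : Ω → EuclideanSpace ℝ (Fin d))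
    (θ₀ : EuclideanSpace ℝ (Fin d)) (C : ℝ) (hC : 0 ≤ C)
    (hpos : ∀ x, 0 < p x) (M : ℝ) (hbdd : ∀ x, p x ≤ M)
    (hintp : Integrable (fun ω => p (θ ω)) μ)
    (hintr : Integrable (fun ω => p θ₀ / p (θ ω)) μ)
    (hintθ : Integrable (fun ω => ‖θ ω - θ₀‖) μ)
    (hLip : ∀ᵐ ω ∂μ, |p (θ ω) - p θ₀| ≤ C * p (θ ω) * ‖θ ω - θ₀‖) :
    max (Real.log (p θ₀ / ∫ ω, p (θ ω) ∂μ)) 0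
        ≤ Real.log (1 + C * ∫ ω, ‖θ ω - θ₀‖ ∂μ)
    ∧ Real.log (1 + C * ∫ ω, ‖θ ω - θ₀‖ ∂μ)
        ≤ C * ∫ ω, ‖θ ω - θ₀‖ ∂μ :=
  reverse_one_sided_log_bound_general d μ p θ θ₀ C hC hpos hintp hintr hintθ hLip
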